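/- arXiv:1709.08944 — 7 statements merged into one kernel-verified Lean document; each statement's English description precedes it below -/
import Mathlib

section
/- For every constant c > 3/8 there exist functions h(z) = Σ_{k=0}^∞ a_k z^k and g(z) = Σ_{k=1}^∞ b_k z^k analytic on the unit disk 𝔻 with |h(z)| ≤ 1 and |g'(z)| ≤ |h'(z)| for all z ∈ 𝔻, such that |a_0| + Σ_{k=1}^∞ (|a_k| + |b_k|) (1/5)^k + c · Σ_{k=1}^∞ (|a_k|² + |b_k|²) (1/5)^k > 1. (In particular, the constant 3/8 at radius 1/5 cannot be improved.) -/
/-!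
The extremal pair is `h = φ`, `g = φ - t` with `φ z = (t + z) / (1 + t z)`, `0 < t < 1`.
Its Taylor coefficients are `t` and `(1 - t²) (-t)^(k-1)`, so both weighted sums are geometric
series, and at `r = 1/5` the left side minus `1` factors as
`(1 - t)² (2c (1 + t)² / (5 - t²) - 3 / (5 - t))`. The second factor tends to `2c - 3/4 > 0`
as `t → 1⁻`.
-/

open Metric Set ComplexConjugate

noncomputable def mobius (a z : ℂ) : ℂ := (a + z) / (1 + conj a * z)

noncomputable def mobiusCoeff (a : ℂ) : ℕ → ℂ
  | 0 => a
  | k + 1 => ((1 - ‖a‖ ^ 2 : ℝ) : ℂ) * (-conj a) ^ k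

section Mobius

variable {a z : ℂ}

lemma one_add_conj_mul_ne_zero (h : ‖a * z‖ < 1) : 1 + conj a * z ≠ 0 := by
  intro h0
  have : conj a * z = -1 := by linear_combination h0
  have := congrArg norm this
  simp at this h
  linarith

lemma mobius_sub_self (h : ‖a * z‖ < 1) :
    mobius a z - a = ((1 - ‖a‖ ^ 2 : ℝ) : ℂ) * z / (1 + conj a * z) := by
  have hd := one_add_conj_mul_ne_zero h
  rw [mobius, eq_div_iff hd, sub_mul, div_mul_cancel₀ _ hd]
  push_cast
  rw [← Complex.mul_conj']
  ring

lemma hasSum_mobiusCoeff_succ (h : ‖a * z‖ < 1) :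
    HasSum (fun k => mobiusCoeff a (k + 1) * z ^ (k + 1)) (mobius a z - a) := by
  have hgeom : HasSum (fun k => (-conj a * z) ^ k) (1 + conj a * z)⁻¹ := by
    simpa [sub_eq_add_neg] using
      hasSum_geometric_of_norm_lt_one (by simpa [norm_mul] using h : ‖-conj a * z‖ < 1)
  have hterm : (fun k => mobiusCoeff a (k + 1) * z ^ (k + 1)) =
      fun k => ((1 - ‖a‖ ^ 2 : ℝ) : ℂ) * z * (-conj a * z) ^ k := by
    funext k
    simp only [mobiusCoeff, mul_pow, pow_succ]
    ring
  rw [hterm, mobius_sub_self h, div_eq_mul_inv]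
  exact hgeom.mul_left _

lemma hasSum_mobiusCoeff (h : ‖a * z‖ < 1) :
    HasSum (fun k => mobiusCoeff a k * z ^ k) (mobius a z) := by
  have := (hasSum_mobiusCoeff_succ h).zero_add (f := fun k => mobiusCoeff a k * z ^ k)
  rwa [show mobiusCoeff a 0 * z ^ 0 = a by simp [mobiusCoeff], add_sub_cancel] at this

lemma normSq_one_add_conj_mul_sub_normSq_add :
    Complex.normSq (1 + conj a * z) - Complex.normSq (a + z) =
      (1 - Complex.normSq a) * (1 - Complex.normSq z) := by
  simp only [Complex.normSq_apply, Complex.add_re, Complex.add_im, Complex.mul_re,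
    Complex.mul_im, Complex.conj_re, Complex.conj_im, Complex.one_re, Complex.one_im]
  ring

lemma norm_mobius_le_one (ha : ‖a‖ ≤ 1) (hz : ‖z‖ ≤ 1) : ‖mobius a z‖ ≤ 1 := by
  rw [mobius, norm_div]
  refine div_le_one_of_le₀ ?_ (norm_nonneg _)
  have hid := normSq_one_add_conj_mul_sub_normSq_add (a := a) (z := z)
  simp only [Complex.normSq_eq_norm_sq] at hid
  have hsq : ‖a + z‖ ^ 2 ≤ ‖1 + conj a * z‖ ^ 2 := by
    nlinarith [mul_nonneg (sub_nonneg.2 (pow_le_one₀ (n := 2) (norm_nonneg a) ha))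
      (sub_nonneg.2 (pow_le_one₀ (n := 2) (norm_nonneg z) hz))]
  exact (pow_le_pow_iff_left₀ (norm_nonneg _) (norm_nonneg _) two_ne_zero).1 hsq

lemma differentiableOn_mobius (ha : ‖a‖ ≤ 1) : DifferentiableOn ℂ (mobius a) (ball 0 1) := by
  refine fun z hz => DifferentiableAt.differentiableWithinAt ?_
  have : ‖a * z‖ < 1 := by
    rw [norm_mul]
    exact mul_lt_one_of_nonneg_of_lt_one_right ha (norm_nonneg z) (mem_ball_zero_iff.1 hz)
  unfold mobius
  fun_prop (disch := exact one_add_conj_mul_ne_zero this)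

end Mobius

lemma norm_mobiusCoeff_succ {a : ℂ} (ha : ‖a‖ ≤ 1) (k : ℕ) :
    ‖mobiusCoeff a (k + 1)‖ = (1 - ‖a‖ ^ 2) * ‖a‖ ^ k := by
  rw [mobiusCoeff, norm_mul, norm_pow, norm_neg, Complex.norm_conj, Complex.norm_real,
    Real.norm_of_nonneg (sub_nonneg.2 (pow_le_one₀ (norm_nonneg a) ha))]

section WeightedSums

variable {a : ℂ} {r : ℝ}

lemma hasSum_norm_mobiusCoeff_succ_mul_pow (ha : ‖a‖ ≤ 1) (hr : 0 ≤ r) (har : ‖a‖ * r < 1) :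
    HasSum (fun k => ‖mobiusCoeff a (k + 1)‖ * r ^ (k + 1))
      ((1 - ‖a‖ ^ 2) * r / (1 - ‖a‖ * r)) := by
  have hterm : (fun k => ‖mobiusCoeff a (k + 1)‖ * r ^ (k + 1)) =
      fun k => (1 - ‖a‖ ^ 2) * r * (‖a‖ * r) ^ k := by
    funext k
    rw [norm_mobiusCoeff_succ ha, mul_pow, pow_succ]
    ring
  rw [hterm, div_eq_mul_inv]
  exact (hasSum_geometric_of_lt_one (by positivity) har).mul_left _

lemma hasSum_sq_norm_mobiusCoeff_succ_mul_pow (ha : ‖a‖ ≤ 1) (hr : 0 ≤ r)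
    (har : ‖a‖ ^ 2 * r < 1) :
    HasSum (fun k => ‖mobiusCoeff a (k + 1)‖ ^ 2 * r ^ (k + 1))
      ((1 - ‖a‖ ^ 2) ^ 2 * r / (1 - ‖a‖ ^ 2 * r)) := by
  have hterm : (fun k => ‖mobiusCoeff a (k + 1)‖ ^ 2 * r ^ (k + 1)) =
      fun k => (1 - ‖a‖ ^ 2) ^ 2 * r * (‖a‖ ^ 2 * r) ^ k := by
    funext k
    rw [norm_mobiusCoeff_succ ha, mul_pow, mul_pow, pow_succ, ← pow_mul, ← pow_mul]
    ring
  rw [hterm, div_eq_mul_inv]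
  exact (hasSum_geometric_of_lt_one (by positivity) har).mul_left _

end WeightedSums

/-- The left side of the inequality for `h = mobius t`, `g = mobius t - t`. -/
noncomputable def mobiusBohrSum (c r t : ℝ) : ℝ :=
  t + 2 * ((1 - t ^ 2) * r / (1 - t * r)) + c * (2 * ((1 - t ^ 2) ^ 2 * r / (1 - t ^ 2 * r)))

lemma mobiusBohrSum_sub_one {c t : ℝ} (ht : |t| ≤ 1) :
    mobiusBohrSum c (1 / 5) t - 1 =
      (1 - t) ^ 2 * (2 * c * (1 + t) ^ 2 / (5 - t ^ 2) - 3 / (5 - t)) := by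
  obtain ⟨ht0, ht1⟩ := abs_le.1 ht
  have h1 : 5 - t ≠ 0 := by linarith
  have h2 : 5 - t ^ 2 ≠ 0 := by nlinarith
  have h3 : 1 - t * (1 / 5) ≠ 0 := by linarith
  have h4 : 1 - t ^ 2 * (1 / 5) ≠ 0 := by nlinarith
  rw [mobiusBohrSum]
  field_simp
  ring

lemma exists_one_lt_mobiusBohrSum {c : ℝ} (hc : 3 / 8 < c) :
    ∃ t ∈ Ioo (0 : ℝ) 1, 1 < mobiusBohrSum c (1 / 5) t := by
  set F : ℝ → ℝ := fun t => 2 * c * (1 + t) ^ 2 / (5 - t ^ 2) - 3 / (5 - t)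
  have hF : ContinuousAt F 1 := by
    fun_prop (disch := norm_num)
  have hF1 : 0 < F 1 := by
    norm_num [F]
    linarith
  obtain ⟨t, hFt, ht⟩ := ((hF.tendsto.mono_left nhdsWithin_le_nhds).eventually_const_lt hF1
    |>.and (Ioo_mem_nhdsLT zero_lt_one)).exists
  refine ⟨t, ht, sub_pos.1 ?_⟩
  rw [mobiusBohrSum_sub_one (abs_le.2 ⟨by linarith [ht.1], ht.2.le⟩)]
  exact mul_pos (pow_pos (sub_pos.2 ht.2) 2) hFt

/-- Sharpness of the constant `3/8`: for every `c > 3/8` there are `h, g` analytic on the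
unit disk with `|h| ≤ 1` and `|g'| ≤ |h'|` for which the corresponding sum at `r = 1/5`
with constant `c` exceeds `1`. -/
theorem stmt5 (c : ℝ) (hc : 3/8 < c) :
    ∃ (h g : ℂ → ℂ) (a b : ℕ → ℂ), b 0 = 0 ∧
      (∀ z ∈ ball (0:ℂ) 1, HasSum (fun k => a k * z ^ k) (h z)) ∧
      (∀ z ∈ ball (0:ℂ) 1, HasSum (fun k => b k * z ^ k) (g z)) ∧
      DifferentiableOn ℂ h (ball (0:ℂ) 1) ∧
      DifferentiableOn ℂ g (ball (0:ℂ) 1) ∧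
      (∀ z ∈ ball (0:ℂ) 1, ‖h z‖ ≤ 1) ∧
      (∀ z ∈ ball (0:ℂ) 1, ‖deriv g z‖ ≤ ‖deriv h z‖) ∧
      1 < ‖a 0‖
        + (∑' k : ℕ, (‖a (k+1)‖ + ‖b (k+1)‖) * (1/5 : ℝ) ^ (k+1))
        + c * ∑' k : ℕ,
            ((‖a (k+1)‖)^2 + (‖b (k+1)‖)^2) * (1/5 : ℝ) ^ (k+1) := by
  obtain ⟨t, ⟨ht0, ht1⟩, hsum⟩ := exists_one_lt_mobiusBohrSum hc
  set a : ℂ := (t : ℂ)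
  have ha : ‖a‖ = t := by simp [a, abs_of_pos ht0]
  have ha1 : ‖a‖ ≤ 1 := ha.trans_lt ht1 |>.le
  have hdisk : ∀ z ∈ ball (0 : ℂ) 1, ‖a * z‖ < 1 := fun z hz => by
    rw [norm_mul]
    exact mul_lt_one_of_nonneg_of_lt_one_right ha1 (norm_nonneg z) (mem_ball_zero_iff.1 hz)
  set b := Function.update (mobiusCoeff a) 0 0
  have hb : ∀ k, b (k + 1) = mobiusCoeff a (k + 1) := fun k =>
    Function.update_of_ne k.succ_ne_zero _ _
  have hb0 : b 0 = 0 := Function.update_self ..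
  refine ⟨mobius a, fun z => mobius a z - a, mobiusCoeff a, b, hb0,
    fun z hz => hasSum_mobiusCoeff (hdisk z hz), fun z hz => ?_, differentiableOn_mobius ha1,
    (differentiableOn_mobius ha1).sub_const a,
    fun z hz => norm_mobius_le_one ha1 (mem_ball_zero_iff.1 hz).le,
    fun z _ => by rw [deriv_sub_const], ?_⟩
  · simpa [hb, hb0] using
      (hasSum_mobiusCoeff_succ (hdisk z hz)).zero_add (f := fun k => b k * z ^ k)
  · simp only [hb, ← two_mul, mul_assoc, tsum_mul_left]
    rw [(hasSum_norm_mobiusCoeff_succ_mul_pow ha1 (by norm_num) (by nlinarith)).tsum_eq,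
      (hasSum_sq_norm_mobiusCoeff_succ_mul_pow ha1 (by norm_num) (by nlinarith)).tsum_eq]
    simpa [mobiusCoeff, ha, mobiusBohrSum] using hsum
end

section
/- Let h(z) = Σ_{k=0}^∞ a_k z^k and g(z) = Σ_{k=1}^∞ b_k z^k be analytic on the unit disk 𝔻 with |h(z)| ≤ 1 and |g'(z)| ≤ |h'(z)| for all z ∈ 𝔻. Then for every r with 0 ≤ r ≤ 1/5 and every z ∈ ℂ with |z| ≤ r, |a_0| + Σ_{k=1}^∞ (|a_k| + |b_k|) r^k + |h(z) − a_0|² ≤ 1. -/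
/-!
Write `A(r) = ∑_{k ≥ 1} |a_k| r^k`. Averaging `h` over the rotations of `z` by the `k`-th roots of
unity leaves the bounded function `∑_m a_{km} z^{km}`, so the Schwarz–Pick inequality at the origin
gives F. Wiener's bound `|a_k| ≤ 1 - |a_0|²`. Hence `A(r) ≤ (1 - |a_0|²) r / (1 - r)`, which is at
most `(1 - |a_0|²) / 4` for `r ≤ 1/5`, and `|h(z) - a_0| ≤ A(r)` for `|z| ≤ r`.

Since `|g'| ≤ |h'|`, the quotient `g' / h'` has removable singularities, so `g' = ω h'` with
`|ω| ≤ 1`. Comparing coefficients, `k |b_k| ≤ ∑_{i + j = k} |c_i| j |a_j|` where `c` are the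
coefficients of `ω`, so `∑_{k ≥ 1} |b_k| r^k ≤ (∑ |c_i| r^i) A(r) ≤ A(r)` by Bohr's inequality
`∑ |c_i| r^i ≤ 1` (`r ≤ 1/3`). With `x = |a_0|` it remains to check
`x + (1 - x²) / 2 + (1 - x²)² / 16 ≤ 1`.
-/

open Metric Complex ComplexConjugate Filter Topology Finset.HasAntidiagonal
open scoped Nat

def HasPowerSeriesOnUnitDisk (u : ℕ → ℂ) (F : ℂ → ℂ) : Prop :=
  ∀ z ∈ ball (0 : ℂ) 1, HasSum (fun n => u n * z ^ n) (F z)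

lemma zero_mem_unitDisk : (0 : ℂ) ∈ ball (0 : ℂ) 1 := mem_ball_self one_pos

lemma eball_zero_one : eball (0 : ℂ) 1 = ball 0 1 := by
  simpa using eball_coe (x := (0 : ℂ)) (ε := 1)

namespace HasPowerSeriesOnUnitDisk

variable {u v : ℕ → ℂ} {F G : ℂ → ℂ}

lemma of_differentiableOn (hF : DifferentiableOn ℂ F (ball 0 1)) :
    HasPowerSeriesOnUnitDisk (fun n => iteratedDeriv n F 0 / n !) F := fun z hz => by
  refine (Complex.hasSum_taylorSeries_on_ball hF hz).congr_fun fun n => ?_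
  rw [sub_zero, smul_eq_mul, smul_eq_mul]
  ring

lemma one_le_radius (hu : HasPowerSeriesOnUnitDisk u F) :
    1 ≤ (FormalMultilinearSeries.ofScalars ℂ u).radius := by
  refine ENNReal.le_of_forall_nnreal_lt fun t ht => ?_
  have ht' : (t : ℂ) ∈ ball (0 : ℂ) 1 := by simpa using ht
  refine FormalMultilinearSeries.le_radius_of_tendsto _ (l := 0) ?_
  simpa [FormalMultilinearSeries.ofScalars_norm] using
    (hu _ ht').summable.tendsto_atTop_zero.norm

lemma summable_norm_mul_pow (hu : HasPowerSeriesOnUnitDisk u F) {s : ℝ} (hs₀ : 0 ≤ s)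
    (hs : s < 1) : Summable fun n => ‖u n‖ * s ^ n := by
  lift s to NNReal using hs₀
  simpa [FormalMultilinearSeries.ofScalars_norm] using
    (FormalMultilinearSeries.ofScalars ℂ u).summable_norm_mul_pow
      ((ENNReal.coe_lt_one_iff.mpr hs).trans_le hu.one_le_radius)

lemma hasFPowerSeriesOnBall (hu : HasPowerSeriesOnUnitDisk u F) :
    HasFPowerSeriesOnBall F (FormalMultilinearSeries.ofScalars ℂ u) 0 1 where
  r_le := hu.one_le_radius
  r_pos := one_pos
  hasSum {y} hy := by
    simpa [FormalMultilinearSeries.ofScalars_apply_eq, mul_comm] using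
      hu y (eball_zero_one ▸ hy)

lemma differentiableOn (hu : HasPowerSeriesOnUnitDisk u F) :
    DifferentiableOn ℂ F (ball 0 1) := by
  simpa [eball_zero_one] using hu.hasFPowerSeriesOnBall.differentiableOn

lemma unique (hu : HasPowerSeriesOnUnitDisk u F) (hv : HasPowerSeriesOnUnitDisk v F) :
    u = v :=
  FormalMultilinearSeries.ofScalars_series_injective ℂ ℂ <|
    hu.hasFPowerSeriesOnBall.hasFPowerSeriesAt.eq_formalMultilinearSeries
      hv.hasFPowerSeriesOnBall.hasFPowerSeriesAt

lemma eq_iteratedDeriv_div (hu : HasPowerSeriesOnUnitDisk u F) (n : ℕ) :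
    u n = iteratedDeriv n F 0 / n ! :=
  congrFun (hu.unique (of_differentiableOn hu.differentiableOn)) n

lemma deriv (hu : HasPowerSeriesOnUnitDisk u F) :
    HasPowerSeriesOnUnitDisk (fun n => (n + 1) * u (n + 1)) (deriv F) := by
  have hF' : DifferentiableOn ℂ (_root_.deriv F) (ball 0 1) :=
    (hu.differentiableOn.analyticOnNhd isOpen_ball).deriv.differentiableOn
  convert of_differentiableOn hF' using 2 with n
  rw [hu.eq_iteratedDeriv_div, ← iteratedDeriv_succ', Nat.factorial_succ]
  push_cast
  field_simp

lemma apply_zero (hu : HasPowerSeriesOnUnitDisk u F) : F 0 = u 0 :=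
  (hu 0 zero_mem_unitDisk).unique <| by
    simpa using hasSum_single (f := fun n => u n * (0 : ℂ) ^ n) 0 fun n hn => by simp [hn]

lemma deriv_zero (hu : HasPowerSeriesOnUnitDisk u F) : _root_.deriv F 0 = u 1 := by
  simpa using hu.deriv.apply_zero

lemma mul (hu : HasPowerSeriesOnUnitDisk u F) (hv : HasPowerSeriesOnUnitDisk v G) :
    HasPowerSeriesOnUnitDisk (fun n => ∑ p ∈ antidiagonal n, u p.1 * v p.2)
      (fun z => F z * G z) := fun z hz => by
  have hz1 : ‖z‖ < 1 := mem_ball_zero_iff.mp hz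
  have hu₁ : Summable fun n => ‖u n * z ^ n‖ := by
    simpa [norm_mul, norm_pow] using hu.summable_norm_mul_pow (norm_nonneg z) hz1
  have hv₁ : Summable fun n => ‖v n * z ^ n‖ := by
    simpa [norm_mul, norm_pow] using hv.summable_norm_mul_pow (norm_nonneg z) hz1
  have hterm : (fun n => (∑ p ∈ antidiagonal n, u p.1 * v p.2) * z ^ n) =
      fun n => ∑ p ∈ antidiagonal n, (u p.1 * z ^ p.1) * (v p.2 * z ^ p.2) := by
    funext n
    rw [Finset.sum_mul]
    refine Finset.sum_congr rfl fun p hp => ?_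
    rw [← mem_antidiagonal.mp hp, pow_add]
    ring
  have hprod := tsum_mul_tsum_eq_tsum_sum_antidiagonal_of_summable_norm hu₁ hv₁
  rw [(hu z hz).tsum_eq, (hv z hz).tsum_eq] at hprod
  show HasSum _ (F z * G z)
  rw [hterm, hprod]
  exact (summable_norm_sum_mul_antidiagonal_of_summable_norm hu₁ hv₁).of_norm.hasSum

end HasPowerSeriesOnUnitDisk

lemma normSq_one_sub_conj_mul_sub_normSq_sub (w₀ w : ℂ) :
    normSq (1 - conj w₀ * w) - normSq (w₀ - w) = (1 - normSq w₀) * (1 - normSq w) := by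
  simp only [normSq_apply, sub_re, sub_im, mul_re, mul_im, one_re, one_im, conj_re, conj_im]
  ring

lemma one_sub_conj_mul_ne_zero {w₀ w : ℂ} (h₀ : ‖w₀‖ < 1) (hw : ‖w‖ ≤ 1) :
    1 - conj w₀ * w ≠ 0 := by
  refine sub_ne_zero.mpr fun h => ?_
  have : ‖conj w₀ * w‖ < 1 := by
    rw [norm_mul, RCLike.norm_conj]
    nlinarith [norm_nonneg w₀, norm_nonneg w]
  simp [← h] at this

lemma norm_sub_div_one_sub_conj_mul_le_one {w₀ w : ℂ} (h₀ : ‖w₀‖ < 1) (hw : ‖w‖ ≤ 1) :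
    ‖(w₀ - w) / (1 - conj w₀ * w)‖ ≤ 1 := by
  rw [norm_div, div_le_one (norm_pos_iff.mpr (one_sub_conj_mul_ne_zero h₀ hw)),
    ← sq_le_sq₀ (norm_nonneg _) (norm_nonneg _), ← normSq_eq_norm_sq, ← normSq_eq_norm_sq,
    ← sub_nonneg, normSq_one_sub_conj_mul_sub_normSq_sub, normSq_eq_norm_sq, normSq_eq_norm_sq]
  exact mul_nonneg (by nlinarith [norm_nonneg w₀]) (by nlinarith [norm_nonneg w])

lemma norm_one_sub_conj_mul_self {w : ℂ} (hw : ‖w‖ ≤ 1) :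
    ‖1 - conj w * w‖ = 1 - ‖w‖ ^ 2 := by
  rw [conj_mul', ← ofReal_pow, ← ofReal_one, ← ofReal_sub, norm_real, Real.norm_eq_abs,
    abs_of_nonneg (by nlinarith [norm_nonneg w])]

theorem norm_deriv_zero_le_one_sub_sq {F : ℂ → ℂ} (hd : DifferentiableOn ℂ F (ball 0 1))
    (hb : ∀ z ∈ ball (0 : ℂ) 1, ‖F z‖ ≤ 1) : ‖deriv F 0‖ ≤ 1 - ‖F 0‖ ^ 2 := by
  rcases (hb 0 zero_mem_unitDisk).lt_or_eq with h₀ | h₀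
  · have hden : ∀ z ∈ ball (0 : ℂ) 1, 1 - conj (F 0) * F z ≠ 0 := fun z hz =>
      one_sub_conj_mul_ne_zero h₀ (hb z hz)
    -- `Φ` is `F` followed by the disk automorphism exchanging `F 0` and `0`.
    set Φ : ℂ → ℂ := fun z => (F 0 - F z) / (1 - conj (F 0) * F z)
    have hΦd : DifferentiableOn ℂ Φ (ball 0 1) :=
      ((differentiableOn_const _).sub hd).div
        ((differentiableOn_const _).sub ((differentiableOn_const _).mul hd)) hden
    have hΦ : Set.MapsTo Φ (ball 0 1) (closedBall (Φ 0) 1) := fun z hz => by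
      simpa [Φ] using norm_sub_div_one_sub_conj_mul_le_one h₀ (hb z hz)
    have hF' : HasDerivAt F (deriv F 0) 0 :=
      (hd.differentiableAt (isOpen_ball.mem_nhds zero_mem_unitDisk)).hasDerivAt
    have hΦ' : HasDerivAt Φ (-deriv F 0 / (1 - conj (F 0) * F 0)) 0 := by
      refine ((hF'.const_sub (F 0)).div ((hF'.const_mul (conj (F 0))).const_sub 1)
        (hden 0 zero_mem_unitDisk)).congr_deriv ?_
      rw [sub_self, zero_mul, sub_zero]
      field_simp [hden 0 zero_mem_unitDisk]
    have := norm_deriv_le_div_of_mapsTo_ball hΦd hΦ one_pos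
    rw [hΦ'.deriv, norm_div, norm_neg, norm_one_sub_conj_mul_self h₀.le, div_one,
      div_le_one (by nlinarith [norm_nonneg (F 0)])] at this
    exact this
  · have hconst : Set.EqOn F (Function.const ℂ (F 0)) (ball 0 1) :=
      Complex.eqOn_of_isPreconnected_of_isMaxOn_norm (convex_ball 0 1).isPreconnected
        isOpen_ball hd zero_mem_unitDisk fun z hz => by simpa [h₀] using hb z hz
    rw [(Filter.eventuallyEq_of_mem (isOpen_ball.mem_nhds zero_mem_unitDisk) hconst).deriv_eq, h₀,
      show deriv (Function.const ℂ (F 0)) 0 = 0 from deriv_const 0 (F 0)]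
    norm_num

lemma HasPowerSeriesOnUnitDisk.norm_coeff_one_le {u : ℕ → ℂ} {F : ℂ → ℂ}
    (hu : HasPowerSeriesOnUnitDisk u F) (hb : ∀ z ∈ ball (0 : ℂ) 1, ‖F z‖ ≤ 1) :
    ‖u 1‖ ≤ 1 - ‖u 0‖ ^ 2 := by
  simpa only [hu.deriv_zero, hu.apply_zero] using
    norm_deriv_zero_le_one_sub_sq hu.differentiableOn hb

lemma IsPrimitiveRoot.sum_pow_pow_eq_ite {K : Type*} [Field K] {ζ : K} {k : ℕ}
    (hζ : IsPrimitiveRoot ζ k) (n : ℕ) :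
    ∑ l ∈ Finset.range k, (ζ ^ l) ^ n = if k ∣ n then (k : K) else 0 := by
  simp_rw [← pow_mul, mul_comm _ n, pow_mul]
  split_ifs with hkn
  · simp [(hζ.pow_eq_one_iff_dvd n).mpr hkn]
  · rw [geom_sum_eq (mt (hζ.pow_eq_one_iff_dvd n).mp hkn), ← pow_mul, mul_comm, pow_mul,
      hζ.pow_eq_one, one_pow, sub_self, zero_div]

namespace HasPowerSeriesOnUnitDisk

variable {u : ℕ → ℂ} {F : ℂ → ℂ}

lemma hasSum_coeff_mul_average_rotations (hu : HasPowerSeriesOnUnitDisk u F) {ζ : ℂ} {k : ℕ}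
    (hζ : IsPrimitiveRoot ζ k) (hk : k ≠ 0) {z : ℂ} (hz : z ∈ ball (0 : ℂ) 1) :
    HasSum (fun m => u (k * m) * (z ^ k) ^ m)
      ((k : ℂ)⁻¹ * ∑ l ∈ Finset.range k, F (ζ ^ l * z)) := by
  have hrot : ∀ l, ζ ^ l * z ∈ ball (0 : ℂ) 1 := fun l => by
    simpa [norm_mul, norm_pow, hζ.norm'_eq_one hk] using hz
  have hsum := (hasSum_sum (s := Finset.range k) fun l _ => hu _ (hrot l)).mul_left (k : ℂ)⁻¹
  have hterm : ∀ n, (k : ℂ)⁻¹ * ∑ l ∈ Finset.range k, u n * (ζ ^ l * z) ^ n =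
      if k ∣ n then u n * z ^ n else 0 := fun n => by
    rw [show ∑ l ∈ Finset.range k, u n * (ζ ^ l * z) ^ n =
        u n * z ^ n * ∑ l ∈ Finset.range k, (ζ ^ l) ^ n by
      rw [Finset.mul_sum]; exact Finset.sum_congr rfl fun l _ => by ring,
      hζ.sum_pow_pow_eq_ite n]
    split_ifs
    · field_simp
    · rw [mul_zero, mul_zero]
  simp only [hterm] at hsum
  rw [← (mul_right_injective₀ hk).hasSum_iff fun n hn => if_neg fun ⟨m, hm⟩ => hn ⟨m, hm.symm⟩]
    at hsum
  simpa [Function.comp_def, pow_mul] using hsum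

lemma exists_pow_eq_of_mem_unitDisk {w : ℂ} (hw : w ∈ ball (0 : ℂ) 1) {k : ℕ} (hk : k ≠ 0) :
    ∃ z ∈ ball (0 : ℂ) 1, z ^ k = w := by
  obtain ⟨z, rfl⟩ := IsAlgClosed.exists_pow_nat_eq w (Nat.pos_of_ne_zero hk)
  refine ⟨z, ?_, rfl⟩
  rw [mem_ball_zero_iff, norm_pow] at hw
  rw [mem_ball_zero_iff]
  exact (pow_lt_one_iff_of_nonneg (norm_nonneg z) hk).mp hw

theorem norm_coeff_le_one_sub_sq (hu : HasPowerSeriesOnUnitDisk u F)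
    (hb : ∀ z ∈ ball (0 : ℂ) 1, ‖F z‖ ≤ 1) {k : ℕ} (hk : k ≠ 0) :
    ‖u k‖ ≤ 1 - ‖u 0‖ ^ 2 := by
  set ζ := Complex.exp (2 * Real.pi * I / k)
  have hζ : IsPrimitiveRoot ζ k := Complex.isPrimitiveRoot_exp k hk
  have hsection : ∀ w ∈ ball (0 : ℂ) 1,
      ∃ S, HasSum (fun m => u (k * m) * w ^ m) S ∧ ‖S‖ ≤ 1 := fun w hw => by
    obtain ⟨z, hz, rfl⟩ := exists_pow_eq_of_mem_unitDisk hw hk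
    refine ⟨_, hu.hasSum_coeff_mul_average_rotations hζ hk hz, ?_⟩
    have hrot : ∀ l, ‖F (ζ ^ l * z)‖ ≤ 1 := fun l => hb _ <| by
      simpa [norm_mul, norm_pow, hζ.norm'_eq_one hk] using hz
    calc ‖(k : ℂ)⁻¹ * ∑ l ∈ Finset.range k, F (ζ ^ l * z)‖
        ≤ (k : ℝ)⁻¹ * ∑ l ∈ Finset.range k, 1 := by
          rw [norm_mul, norm_inv, Complex.norm_natCast]
          gcongr
          exact (norm_sum_le _ _).trans (Finset.sum_le_sum fun l _ => hrot l)
      _ = 1 := by simp [hk]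
  choose! S hS hS₁ using hsection
  have hΦ : HasPowerSeriesOnUnitDisk (fun m => u (k * m)) S := hS
  simpa using hΦ.norm_coeff_one_le hS₁

end HasPowerSeriesOnUnitDisk

lemma limUnder_nhdsNE_eq_of_continuousAt {f : ℂ → ℂ} {z : ℂ} (hf : ContinuousAt f z) :
    limUnder (𝓝[≠] z) f = f z :=
  (hf.tendsto.mono_left nhdsWithin_le_nhds).limUnder_eq

section Quotient

variable {U : Set ℂ} {G H : ℂ → ℂ}

/-- The limit of `G / H` along punctured neighbourhoods is `G / H` itself where `H ≠ 0`; at an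
isolated zero of `H` the bound `‖G / H‖ ≤ 1` makes the singularity removable. -/
lemma differentiableAt_limUnder_div_of_norm_le (hU : IsOpen U) (hG : DifferentiableOn ℂ G U)
    (hH : DifferentiableOn ℂ H U) (hle : ∀ z ∈ U, ‖G z‖ ≤ ‖H z‖) {z₀ : ℂ} (hz₀ : z₀ ∈ U)
    (hne : ∀ᶠ z in 𝓝[≠] z₀, H z ≠ 0) :
    DifferentiableAt ℂ (fun z => limUnder (𝓝[≠] z) fun w => G w / H w) z₀ ∧
      ‖limUnder (𝓝[≠] z₀) fun w => G w / H w‖ ≤ 1 := by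
  set q : ℂ → ℂ := fun w => G w / H w
  set ω : ℂ → ℂ := fun z => limUnder (𝓝[≠] z) q
  obtain ⟨s, hsub, hs, hz₀s⟩ := _root_.mem_nhds_iff.mp <|
    (eventually_nhdsWithin_iff.mp hne).and (hU.mem_nhds hz₀)
  have hsU : ∀ w ∈ s \ {z₀}, w ∈ U ∧ H w ≠ 0 := fun w hw => ⟨(hsub hw.1).2, (hsub hw.1).1 hw.2⟩
  have hq : ∀ w ∈ s \ {z₀}, DifferentiableAt ℂ q w := fun w hw =>
    (hG.differentiableAt (hU.mem_nhds (hsU w hw).1)).div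
      (hH.differentiableAt (hU.mem_nhds (hsU w hw).1)) (hsU w hw).2
  have hq₁ : ∀ w ∈ s \ {z₀}, ‖ω w‖ ≤ 1 := fun w hw => by
    rw [show ω w = q w from limUnder_nhdsNE_eq_of_continuousAt (hq w hw).continuousAt,
      norm_div, div_le_one (norm_pos_iff.mpr (hsU w hw).2)]
    exact hle w (hsU w hw).1
  have hupd : DifferentiableOn ℂ (Function.update q z₀ (ω z₀)) s :=
    Complex.differentiableOn_update_limUnder_of_bddAbove (hs.mem_nhds hz₀s)
      (fun w hw => (hq w hw).differentiableWithinAt)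
      ⟨1, by
        rintro _ ⟨w, hw, rfl⟩
        simpa only [Function.comp_apply, ω,
          limUnder_nhdsNE_eq_of_continuousAt (hq w hw).continuousAt] using hq₁ w hw⟩
  have hω : Set.EqOn ω (Function.update q z₀ (ω z₀)) s := fun w hw => by
    rcases eq_or_ne w z₀ with rfl | hwz
    · rw [Function.update_self]
    · rw [Function.update_of_ne hwz]
      exact limUnder_nhdsNE_eq_of_continuousAt (hq w ⟨hw, hwz⟩).continuousAt
  have hdiff : DifferentiableAt ℂ ω z₀ :=
    (hupd.differentiableAt (hs.mem_nhds hz₀s)).congr_of_eventuallyEq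
      (eventuallyEq_of_mem (hs.mem_nhds hz₀s) hω)
  refine ⟨hdiff, le_of_tendsto (x := 𝓝[≠] z₀)
    (hdiff.continuousAt.tendsto.mono_left nhdsWithin_le_nhds).norm ?_⟩
  filter_upwards [sdiff_mem_nhdsWithin_compl (hs.mem_nhds hz₀s) {z₀}] using hq₁

theorem exists_differentiableOn_eq_mul_of_norm_le (hU : IsOpen U) (hUc : IsPreconnected U)
    (hG : DifferentiableOn ℂ G U) (hH : DifferentiableOn ℂ H U)
    (hle : ∀ z ∈ U, ‖G z‖ ≤ ‖H z‖) :
    ∃ ω : ℂ → ℂ, DifferentiableOn ℂ ω U ∧ (∀ z ∈ U, ‖ω z‖ ≤ 1) ∧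
      ∀ z ∈ U, G z = ω z * H z := by
  have hG₀ : ∀ z ∈ U, H z = 0 → G z = 0 := fun z hz hHz =>
    norm_le_zero_iff.mp (by simpa [hHz] using hle z hz)
  by_cases hH₀ : Set.EqOn H 0 U
  · exact ⟨0, differentiableOn_const 0, by simp, fun z hz => by simp [hG₀ z hz (hH₀ hz)]⟩
  have hne : ∀ z₀ ∈ U, ∀ᶠ z in 𝓝[≠] z₀, H z ≠ 0 := fun z₀ hz₀ =>
    ((hH.analyticOnNhd hU z₀ hz₀).eventually_eq_zero_or_eventually_ne_zero).resolve_left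
      fun h => hH₀ ((hH.analyticOnNhd hU).eqOn_zero_of_preconnected_of_eventuallyEq_zero
        hUc hz₀ h)
  refine ⟨fun z => limUnder (𝓝[≠] z) fun w => G w / H w,
    fun z hz => (differentiableAt_limUnder_div_of_norm_le hU hG hH hle hz (hne z hz)).1
      |>.differentiableWithinAt,
    fun z hz => (differentiableAt_limUnder_div_of_norm_le hU hG hH hle hz (hne z hz)).2,
    fun z hz => ?_⟩
  by_cases hHz : H z = 0
  · simp [hHz, hG₀ z hz hHz]
  · beta_reduce
    have hq : ContinuousAt (fun w => G w / H w) z :=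
      ((hG.differentiableAt (hU.mem_nhds hz)).div
        (hH.differentiableAt (hU.mem_nhds hz)) hHz).continuousAt
    rw [limUnder_nhdsNE_eq_of_continuousAt hq, div_mul_cancel₀ _ hHz]

end Quotient

namespace HasPowerSeriesOnUnitDisk

variable {u : ℕ → ℂ} {F : ℂ → ℂ} {r : ℝ}

lemma summable_norm_succ_mul_pow (hu : HasPowerSeriesOnUnitDisk u F) (hr₀ : 0 ≤ r)
    (hr₁ : r < 1) : Summable fun k => ‖u (k + 1)‖ * r ^ (k + 1) :=
  (summable_nat_add_iff 1).mpr (hu.summable_norm_mul_pow hr₀ hr₁)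

lemma tsum_norm_coeff_succ_mul_pow_le (hu : HasPowerSeriesOnUnitDisk u F)
    (hb : ∀ z ∈ ball (0 : ℂ) 1, ‖F z‖ ≤ 1) (hr₀ : 0 ≤ r) (hr₁ : r < 1) :
    ∑' k, ‖u (k + 1)‖ * r ^ (k + 1) ≤ (1 - ‖u 0‖ ^ 2) * (r / (1 - r)) := by
  have hgeom : HasSum (fun k : ℕ => r ^ (k + 1)) (r / (1 - r)) := by
    simpa [pow_succ', div_eq_mul_inv] using (hasSum_geometric_of_lt_one hr₀ hr₁).mul_left r
  rw [← (hgeom.mul_left _).tsum_eq]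
  refine Summable.tsum_le_tsum (fun k => ?_) (hu.summable_norm_succ_mul_pow hr₀ hr₁)
    (hgeom.mul_left _).summable
  gcongr
  exact hu.norm_coeff_le_one_sub_sq hb k.succ_ne_zero

theorem tsum_norm_mul_pow_le_one (hu : HasPowerSeriesOnUnitDisk u F)
    (hb : ∀ z ∈ ball (0 : ℂ) 1, ‖F z‖ ≤ 1) (hr₀ : 0 ≤ r) (hr : r ≤ 1 / 3) :
    ∑' n, ‖u n‖ * r ^ n ≤ 1 := by
  have hr₁ : r < 1 := by linarith
  have hq : r / (1 - r) ≤ 1 / 2 := by rw [div_le_iff₀ (by linarith)]; linarith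
  have h₀ : ‖u 0‖ ≤ 1 := hu.apply_zero ▸ hb 0 zero_mem_unitDisk
  have htail := hu.tsum_norm_coeff_succ_mul_pow_le hb hr₀ hr₁
  rw [(hu.summable_norm_mul_pow hr₀ hr₁).tsum_eq_zero_add, pow_zero, mul_one]
  nlinarith [norm_nonneg (u 0), mul_le_mul_of_nonneg_left hq
    (show 0 ≤ 1 - ‖u 0‖ ^ 2 by nlinarith [norm_nonneg (u 0)])]

lemma norm_sub_coeff_zero_le (hu : HasPowerSeriesOnUnitDisk u F) (hr₁ : r < 1) {z : ℂ}
    (hz : ‖z‖ ≤ r) : ‖F z - u 0‖ ≤ ∑' k, ‖u (k + 1)‖ * r ^ (k + 1) := by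
  have hF : HasSum (fun k => u (k + 1) * z ^ (k + 1)) (F z - u 0) := by
    simpa using (hasSum_nat_add_iff' 1).mpr (hu z (mem_ball_zero_iff.mpr (hz.trans_lt hr₁)))
  refine hF.norm_le_of_bounded
    (hu.summable_norm_succ_mul_pow ((norm_nonneg z).trans hz) hr₁).hasSum fun k => ?_
  rw [norm_mul, norm_pow]
  gcongr

end HasPowerSeriesOnUnitDisk

section Majorization

variable {a b c : ℕ → ℂ}

lemma norm_succ_le_sum_antidiagonal
    (hbc : ∀ k : ℕ, (k + 1 : ℂ) * b (k + 1) =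
      ∑ p ∈ antidiagonal k, c p.1 * ((p.2 + 1 : ℂ) * a (p.2 + 1))) (k : ℕ) :
    ‖b (k + 1)‖ ≤ ∑ p ∈ antidiagonal k, ‖c p.1‖ * ‖a (p.2 + 1)‖ := by
  have hk : (0 : ℝ) < k + 1 := by positivity
  rw [← mul_le_mul_iff_right₀ hk, Finset.mul_sum]
  calc ((k : ℝ) + 1) * ‖b (k + 1)‖ = ‖(k + 1 : ℂ) * b (k + 1)‖ := by
        rw [norm_mul]; norm_cast
    _ ≤ ∑ p ∈ antidiagonal k, ‖c p.1‖ * (((p.2 : ℝ) + 1) * ‖a (p.2 + 1)‖) := by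
        rw [hbc]
        refine (norm_sum_le _ _).trans_eq (Finset.sum_congr rfl fun p _ => ?_)
        rw [norm_mul, norm_mul]; norm_cast
    _ ≤ ∑ p ∈ antidiagonal k, (k + 1) * (‖c p.1‖ * ‖a (p.2 + 1)‖) := by
        refine Finset.sum_le_sum fun p hp => ?_
        have : (p.2 : ℝ) ≤ k := by
          have := mem_antidiagonal.mp hp
          exact_mod_cast (by omega : p.2 ≤ k)
        nlinarith [mul_nonneg (norm_nonneg (c p.1)) (norm_nonneg (a (p.2 + 1)))]

lemma tsum_norm_succ_mul_pow_le_mul {r : ℝ} (hr : 0 ≤ r)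
    (hc : Summable fun n => ‖c n‖ * r ^ n) (ha : Summable fun k => ‖a (k + 1)‖ * r ^ (k + 1))
    (hb : Summable fun k => ‖b (k + 1)‖ * r ^ (k + 1))
    (hbc : ∀ k : ℕ, (k + 1 : ℂ) * b (k + 1) =
      ∑ p ∈ antidiagonal k, c p.1 * ((p.2 + 1 : ℂ) * a (p.2 + 1))) :
    ∑' k, ‖b (k + 1)‖ * r ^ (k + 1) ≤
      (∑' n, ‖c n‖ * r ^ n) * ∑' k, ‖a (k + 1)‖ * r ^ (k + 1) := by
  have hc' : Summable fun n => ‖‖c n‖ * r ^ n‖ := by simpa only [Real.norm_eq_abs] using hc.abs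
  have ha' : Summable fun k => ‖‖a (k + 1)‖ * r ^ (k + 1)‖ := by
    simpa only [Real.norm_eq_abs] using ha.abs
  rw [tsum_mul_tsum_eq_tsum_sum_antidiagonal_of_summable_norm hc' ha']
  refine Summable.tsum_le_tsum (fun k => ?_) hb
    (summable_norm_sum_mul_antidiagonal_of_summable_norm hc' ha').of_norm
  calc ‖b (k + 1)‖ * r ^ (k + 1)
      ≤ (∑ p ∈ antidiagonal k, ‖c p.1‖ * ‖a (p.2 + 1)‖) * r ^ (k + 1) := by
        gcongr; exact norm_succ_le_sum_antidiagonal hbc k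
    _ = ∑ p ∈ antidiagonal k, ‖c p.1‖ * r ^ p.1 * (‖a (p.2 + 1)‖ * r ^ (p.2 + 1)) := by
        rw [Finset.sum_mul]
        refine Finset.sum_congr rfl fun p hp => ?_
        rw [← mem_antidiagonal.mp hp]
        ring

end Majorization

theorem tsum_norm_succ_mul_pow_le_of_norm_deriv_le {a b : ℕ → ℂ} {h g : ℂ → ℂ}
    (ha : HasPowerSeriesOnUnitDisk a h) (hb : HasPowerSeriesOnUnitDisk b g)
    (hd : ∀ z ∈ ball (0 : ℂ) 1, ‖deriv g z‖ ≤ ‖deriv h z‖) {r : ℝ} (hr₀ : 0 ≤ r)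
    (hr : r ≤ 1 / 3) :
    ∑' k, ‖b (k + 1)‖ * r ^ (k + 1) ≤ ∑' k, ‖a (k + 1)‖ * r ^ (k + 1) := by
  have hr₁ : r < 1 := by linarith
  obtain ⟨ω, hω, hω₁, hgω⟩ := exists_differentiableOn_eq_mul_of_norm_le isOpen_ball
    (convex_ball 0 1).isPreconnected hb.deriv.differentiableOn ha.deriv.differentiableOn hd
  obtain ⟨c, hc⟩ : ∃ c, HasPowerSeriesOnUnitDisk c ω := ⟨_, .of_differentiableOn hω⟩
  have hprod : HasPowerSeriesOnUnitDisk _ (deriv g) := fun z hz => by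
    rw [hgω z hz]
    exact hc.mul ha.deriv z hz
  have hbc := congrFun (hb.deriv.unique hprod)
  have hC := hc.tsum_norm_mul_pow_le_one hω₁ hr₀ hr
  have hA : 0 ≤ ∑' k, ‖a (k + 1)‖ * r ^ (k + 1) := tsum_nonneg fun k => by positivity
  calc ∑' k, ‖b (k + 1)‖ * r ^ (k + 1)
      ≤ (∑' n, ‖c n‖ * r ^ n) * ∑' k, ‖a (k + 1)‖ * r ^ (k + 1) :=
        tsum_norm_succ_mul_pow_le_mul hr₀ (hc.summable_norm_mul_pow hr₀ hr₁)
          (ha.summable_norm_succ_mul_pow hr₀ hr₁) (hb.summable_norm_succ_mul_pow hr₀ hr₁) hbc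
    _ ≤ ∑' k, ‖a (k + 1)‖ * r ^ (k + 1) := mul_le_of_le_one_left hA hC

lemma add_add_sq_le_one {x A B E : ℝ} (hx₀ : 0 ≤ x) (hx₁ : x ≤ 1) (hA : A ≤ (1 - x ^ 2) / 4)
    (hB : B ≤ A) (hE₀ : 0 ≤ E) (hE : E ≤ A) : x + (A + B) + E ^ 2 ≤ 1 := by
  nlinarith [mul_le_mul hE hE hE₀ (hE₀.trans hE), mul_nonneg (sub_nonneg.mpr hx₁) hx₀,
    mul_nonneg (mul_nonneg (sub_nonneg.mpr hx₁) hx₀) (sub_nonneg.mpr hx₁)]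

theorem stmt6_general (h g : ℂ → ℂ) (a b : ℕ → ℂ)
    (hha : ∀ z ∈ ball (0:ℂ) 1, HasSum (fun k => a k * z ^ k) (h z))
    (hga : ∀ z ∈ ball (0:ℂ) 1, HasSum (fun k => b k * z ^ k) (g z))
    (hb : ∀ z ∈ ball (0:ℂ) 1, ‖h z‖ ≤ 1)
    (hd : ∀ z ∈ ball (0:ℂ) 1, ‖deriv g z‖ ≤ ‖deriv h z‖)
    (r : ℝ) (hr0 : 0 ≤ r) (hr : r ≤ 1/5)
    (z : ℂ) (hz : ‖z‖ ≤ r) :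
    ‖a 0‖
      + (∑' k : ℕ, (‖a (k+1)‖ + ‖b (k+1)‖) * r ^ (k+1))
      + (‖h z - a 0‖)^2
      ≤ 1 := by
  have ha : HasPowerSeriesOnUnitDisk a h := hha
  have hg : HasPowerSeriesOnUnitDisk b g := hga
  have hr₁ : r < 1 := by linarith
  have ha₀ : ‖a 0‖ ≤ 1 := ha.apply_zero ▸ hb 0 zero_mem_unitDisk
  have hA : ∑' k, ‖a (k + 1)‖ * r ^ (k + 1) ≤ (1 - ‖a 0‖ ^ 2) / 4 := by
    have hq : r / (1 - r) ≤ 1 / 4 := by rw [div_le_iff₀ (by linarith)]; linarith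
    calc ∑' k, ‖a (k + 1)‖ * r ^ (k + 1) ≤ (1 - ‖a 0‖ ^ 2) * (r / (1 - r)) :=
          ha.tsum_norm_coeff_succ_mul_pow_le hb hr0 hr₁
      _ ≤ (1 - ‖a 0‖ ^ 2) * (1 / 4) := by gcongr; nlinarith [norm_nonneg (a 0)]
      _ = (1 - ‖a 0‖ ^ 2) / 4 := by ring
  rw [tsum_congr fun k => add_mul _ _ _, (ha.summable_norm_succ_mul_pow hr0 hr₁).tsum_add
    (hg.summable_norm_succ_mul_pow hr0 hr₁)]
  exact add_add_sq_le_one (norm_nonneg _) ha₀ hA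
    (tsum_norm_succ_mul_pow_le_of_norm_deriv_le ha hg hd hr0 (by linarith)) (norm_nonneg _)
    (ha.norm_sub_coeff_zero_le hr₁ hz)

/-- If `h(z) = ∑ aₖ zᵏ` and `g(z) = ∑ bₖ zᵏ` are analytic on the unit disk with `|h| ≤ 1`
and `|g'| ≤ |h'|`, then for `0 ≤ r ≤ 1/5` and `|z| ≤ r`,
`|a₀| + ∑_{k≥1} (|aₖ| + |bₖ|) rᵏ + |h(z) - a₀|² ≤ 1`. -/
theorem stmt6 (h g : ℂ → ℂ) (a b : ℕ → ℂ) (hb0 : b 0 = 0)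
    (hha : ∀ z ∈ ball (0:ℂ) 1, HasSum (fun k => a k * z ^ k) (h z))
    (hga : ∀ z ∈ ball (0:ℂ) 1, HasSum (fun k => b k * z ^ k) (g z))
    (hhd : DifferentiableOn ℂ h (ball (0:ℂ) 1))
    (hgd : DifferentiableOn ℂ g (ball (0:ℂ) 1))
    (hb : ∀ z ∈ ball (0:ℂ) 1, ‖h z‖ ≤ 1)
    (hd : ∀ z ∈ ball (0:ℂ) 1, ‖deriv g z‖ ≤ ‖deriv h z‖)
    (r : ℝ) (hr0 : 0 ≤ r) (hr : r ≤ 1/5)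
    (z : ℂ) (hz : ‖z‖ ≤ r) :
    ‖a 0‖
      + (∑' k : ℕ, (‖a (k+1)‖ + ‖b (k+1)‖) * r ^ (k+1))
      + (‖h z - a 0‖)^2
      ≤ 1 :=
  stmt6_general h g a b hha hga hb hd r hr0 hr z hz
end

section
/- The number r_0 = sqrt(5/(9 + 4·sqrt(5))) is the unique root of the equation (10 + 6r²)^{3/2} + 144 r² − 80 = 0 in the interval (0, 1/√2); that is, r_0 lies in (0, 1/√2), satisfies the equation, and any r in (0, 1/√2) satisfying the equation equals r_0. -/
lemma rpow32 (b : ℝ) (hb : 0 ≤ b) : b ^ ((3:ℝ)/2) = (Real.sqrt b)^3 := by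
  rw [show ((3:ℝ)/2) = (1/2) * 3 by ring, Real.rpow_mul hb, ← Real.sqrt_eq_rpow,
    show (3:ℝ) = ((3:ℕ):ℝ) by norm_num, Real.rpow_natCast]

/-- `r₀ = √(5/(9+4√5))` is the unique root of `(10+6r²)^{3/2} + 144r² - 80 = 0` in the
interval `(0, 1/√2)`. -/
theorem stmt9 :
    Real.sqrt (5 / (9 + 4 * Real.sqrt 5)) ∈ Set.Ioo 0 (1 / Real.sqrt 2) ∧
    (10 + 6 * (Real.sqrt (5 / (9 + 4 * Real.sqrt 5)))^2) ^ ((3:ℝ)/2)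
      + 144 * (Real.sqrt (5 / (9 + 4 * Real.sqrt 5)))^2 - 80 = 0 ∧
    ∀ r ∈ Set.Ioo (0:ℝ) (1 / Real.sqrt 2),
      (10 + 6 * r^2) ^ ((3:ℝ)/2) + 144 * r^2 - 80 = 0 →
        r = Real.sqrt (5 / (9 + 4 * Real.sqrt 5)) := by
  set s := Real.sqrt 5 with hsdef
  have hs : s ^ 2 = 5 := Real.sq_sqrt (by norm_num)
  have hs0 : 0 ≤ s := Real.sqrt_nonneg 5
  have hs2 : 2 < s := by nlinarith
  have hs3 : s < 9/4 := by nlinarith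
  have hden : (0:ℝ) < 9 + 4 * s := by linarith
  have heq5 : 5 / (9 + 4 * s) = 45 - 20 * s := by
    rw [div_eq_iff (ne_of_gt hden)]; nlinarith
  have hpos : (0:ℝ) < 45 - 20 * s := by nlinarith
  have hr2 : (Real.sqrt (5 / (9 + 4 * s)))^2 = 45 - 20 * s := by
    rw [Real.sq_sqrt (by positivity), heq5]
  refine ⟨⟨Real.sqrt_pos.mpr (by positivity), ?_⟩, ?_, ?_⟩
  · rw [one_div, ← Real.sqrt_inv]
    apply Real.sqrt_lt_sqrt (by positivity)
    rw [heq5]; nlinarith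
  · rw [hr2]
    have hb : (0:ℝ) ≤ 10 + 6 * (45 - 20 * s) := by nlinarith
    rw [rpow32 _ hb]
    have hsq : 10 + 6 * (45 - 20 * s) = (6 * s - 10)^2 := by nlinarith
    rw [hsq, Real.sqrt_sq (by nlinarith)]
    have hc : s ^ 3 = 5 * s := by
      rw [pow_succ, hs]
    linear_combination (216:ℝ) * hc - 1080 * hs
  · rintro r ⟨hr0, hr1⟩ heqn
    have hsqrt2 : (0:ℝ) < Real.sqrt 2 := Real.sqrt_pos.mpr (by norm_num)
    have ht : r ^ 2 < 1/2 := by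
      have h2 : (1 / Real.sqrt 2)^2 = 1/2 := by
        rw [div_pow, Real.sq_sqrt (by norm_num : (0:ℝ) ≤ 2)]; norm_num
      nlinarith
    have hb : (0:ℝ) ≤ 10 + 6 * r ^ 2 := by positivity
    rw [rpow32 _ hb] at heqn
    set u := Real.sqrt (10 + 6 * r ^ 2) with hudef
    have hu2 : u ^ 2 = 10 + 6 * r ^ 2 := Real.sq_sqrt hb
    have hu0 : 0 ≤ u := Real.sqrt_nonneg _
    have hcube : u ^ 3 = 80 - 144 * r ^ 2 := by linarith
    have h80 : 0 ≤ 80 - 144 * r ^ 2 := by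
      have : 0 ≤ u ^ 3 := pow_nonneg hu0 3
      linarith
    have hkey : (10 + 6 * r ^ 2)^3 = (80 - 144 * r ^ 2)^2 := by
      rw [← hu2, show (u^2)^3 = (u^3)^2 by ring, hcube]
    have hfac : (r^2 - 1) * ((r^2)^2 - 90 * r^2 + 25) = 0 := by
      linear_combination hkey / 216
    have hq : (r^2)^2 - 90 * r^2 + 25 = 0 := by
      rcases mul_eq_zero.mp hfac with h | h
      · exfalso; nlinarith
      · exact h
    have hfac2 : (r^2 - (45 - 20 * s)) * (r^2 - (45 + 20 * s)) = 0 := by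
      linear_combination hq - 400 * hs
    have ht45 : r^2 = 45 - 20 * s := by
      rcases mul_eq_zero.mp hfac2 with h | h
      · linarith
      · exfalso; nlinarith
    rw [heq5, ← ht45, Real.sqrt_sq hr0.le]
end

section
/- Let r_0 ∈ (0,1) be the root of 5x + 2(1−x)·log(1−x) = 1. For every r with r_0 < r < 1 there exist functions h(z) = Σ_{k=0}^∞ a_k z^k and g(z) = Σ_{k=1}^∞ b_k z^k analytic on the unit disk 𝔻 with |h(z)| < 1 on 𝔻 and g'(z) = η z h'(z) for some |η| = 1, such that |a_0| + Σ_{k=1}^∞ (|a_k| + |b_k|) r^k > 1. (In particular, the radius r_0 ≈ 0.299824 is best possible.) -/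
/-!
The extremal pair is `h(z) = (a + z)/(1 + a z)` with real `a ∈ (0, 1)` and
`g(z) = ((1 - a²)/a²) (log (1 + a z) + 1/(1 + a z) - 1)`, the primitive of `z h'(z)` vanishing at
`0`. With `ρ = a r`, the coefficient sum at radius `r` equals `a + (1 - a²) M(a)` where
`M(a) = r/(1 - ρ) + (ρ/(1 - ρ) + log (1 - ρ))/a²`, and
`a + (1 - a²) M(a) - 1 = (1 - a) ((1 + a) M(a) - 1)`. As `a → 1` the second factor tends to
`2 M(1) - 1 = (5r + 2(1 - r) log (1 - r) - 1)/(1 - r)`, which is positive for `r > r₀` since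
`x ↦ 5x + 2(1 - x) log (1 - x)` increases on `[0, 1)`. Hence the sum exceeds `1` for `a` close
to `1`.
-/

open Metric Filter Topology

theorem strictMonoOn_five_mul_add_two_mul_log :
    StrictMonoOn (fun x : ℝ => 5 * x + 2 * (1 - x) * Real.log (1 - x)) (Set.Ico 0 1) := by
  refine strictMonoOn_of_deriv_pos (convex_Ico 0 1) ?_ fun x hx => ?_
  · refine ContinuousOn.add (by fun_prop) (ContinuousOn.mul (by fun_prop) ?_)
    exact ContinuousOn.log (by fun_prop) fun x hx => by linarith [hx.2]
  · rw [interior_Ico] at hx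
    have hx1 : 1 - x ≠ 0 := by linarith [hx.2]
    have hd : HasDerivAt (fun x : ℝ => 5 * x + 2 * (1 - x) * Real.log (1 - x))
        (3 - 2 * Real.log (1 - x)) x := by
      have h1 : HasDerivAt (fun x : ℝ => 1 - x) (-1) x := by
        simpa using (hasDerivAt_id x).const_sub 1
      refine (((hasDerivAt_id x).const_mul 5).add
        ((h1.const_mul 2).mul (h1.log hx1))).congr_deriv ?_
      field_simp
      ring
    rw [hd.deriv]
    linarith [Real.log_neg (by linarith [hx.2]) (by linarith [hx.1] : 1 - x < 1)]

open ComplexConjugate in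
theorem norm_add_div_one_add_conj_mul_lt_one {α z : ℂ} (hα : ‖α‖ < 1) (hz : ‖z‖ < 1) :
    ‖(α + z) / (1 + conj α * z)‖ < 1 := by
  have key : Complex.normSq (1 + conj α * z) - Complex.normSq (α + z)
      = (1 - Complex.normSq α) * (1 - Complex.normSq z) := by
    simp only [Complex.normSq_apply, Complex.add_re, Complex.add_im, Complex.mul_re,
      Complex.mul_im, Complex.conj_re, Complex.conj_im, Complex.one_re, Complex.one_im]
    ring
  simp only [Complex.normSq_eq_norm_sq] at key
  have hlt : ‖α + z‖ < ‖1 + conj α * z‖ := by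
    refine lt_of_pow_lt_pow_left₀ 2 (norm_nonneg _) ?_
    nlinarith [mul_pos (by nlinarith [norm_nonneg α] : 0 < 1 - ‖α‖ ^ 2)
      (by nlinarith [norm_nonneg z] : 0 < 1 - ‖z‖ ^ 2)]
  rw [norm_div, div_lt_one ((norm_nonneg _).trans_lt hlt)]
  exact hlt

noncomputable section

namespace Extremal

def h (α z : ℂ) : ℂ := (α + z) / (1 + α * z)

def g (α z : ℂ) : ℂ :=
  (1 - α ^ 2) / α ^ 2 * (Complex.log (1 + α * z) + (1 + α * z)⁻¹ - 1)

def hCoeff (α : ℂ) : ℕ → ℂ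
  | 0 => α
  | k + 1 => (1 - α ^ 2) * (-α) ^ k

def gCoeff (α : ℂ) : ℕ → ℂ
  | 0 => 0
  | k + 1 => (1 - α ^ 2) / α ^ 2 * (k / (k + 1)) * (-α) ^ (k + 1)

variable {α z : ℂ}

theorem one_add_mul_ne_zero (hz : ‖α * z‖ < 1) : 1 + α * z ≠ 0 :=
  Complex.slitPlane_ne_zero (Complex.mem_slitPlane_of_norm_lt_one hz)

theorem hasSum_hCoeff (hz : ‖α * z‖ < 1) : HasSum (fun k => hCoeff α k * z ^ k) (h α z) := by
  have hne := one_add_mul_ne_zero hz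
  refine (hasSum_nat_add_iff' (f := fun k => hCoeff α k * z ^ k) 1).mp ?_
  have htail : h α z - ∑ k ∈ Finset.range 1, hCoeff α k * z ^ k
      = (1 - α ^ 2) * z * (1 - -(α * z))⁻¹ := by
    simp only [h, Finset.range_one, Finset.sum_singleton, hCoeff, pow_zero, mul_one,
      sub_neg_eq_add]
    field_simp
    ring
  rw [htail]
  have geom := hasSum_geometric_of_norm_lt_one (ξ := -(α * z)) (by rwa [norm_neg])
  refine (geom.mul_left ((1 - α ^ 2) * z)).congr_fun fun k => ?_
  simp only [hCoeff]
  ring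

theorem hasSum_gCoeff (hα : α ≠ 0) (hz : ‖α * z‖ < 1) :
    HasSum (fun k => gCoeff α k * z ^ k) (g α z) := by
  have hne := one_add_mul_ne_zero hz
  have hw : ‖-(α * z)‖ < 1 := by rwa [norm_neg]
  refine (hasSum_nat_add_iff' (f := fun k => gCoeff α k * z ^ k) 1).mp ?_
  have geom := (hasSum_geometric_of_norm_lt_one hw).mul_left (-(α * z))
  have log := Complex.hasSum_taylorSeries_neg_log' hw
  have htail : g α z - ∑ k ∈ Finset.range 1, gCoeff α k * z ^ k
      = (1 - α ^ 2) / α ^ 2 *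
        (-(α * z) * (1 - -(α * z))⁻¹ - -Complex.log (1 - -(α * z))) := by
    simp only [g, Finset.range_one, Finset.sum_singleton, gCoeff, zero_mul, sub_zero,
      sub_neg_eq_add]
    field_simp
    ring
  rw [htail]
  refine ((geom.sub log).mul_left _).congr_fun fun k => ?_
  simp only [gCoeff]
  field_simp
  ring

theorem hasDerivAt_h (hz : 1 + α * z ≠ 0) :
    HasDerivAt (h α) ((1 - α ^ 2) / (1 + α * z) ^ 2) z := by
  have hden : HasDerivAt (fun w => 1 + α * w) α z := by
    simpa using ((hasDerivAt_id z).const_mul α).const_add 1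
  refine (((hasDerivAt_id z).const_add α).div hden hz).congr_deriv ?_
  simp only [id]
  ring

theorem hasDerivAt_g (hα : α ≠ 0) (hz : ‖α * z‖ < 1) :
    HasDerivAt (g α) (z * ((1 - α ^ 2) / (1 + α * z) ^ 2)) z := by
  have hden : HasDerivAt (fun w => 1 + α * w) α z := by
    simpa using ((hasDerivAt_id z).const_mul α).const_add 1
  have hne := one_add_mul_ne_zero hz
  have hlog := hden.clog (Complex.mem_slitPlane_of_norm_lt_one hz)
  refine (((hlog.add (hden.inv hne)).sub_const 1).const_mul _).congr_deriv ?_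
  field_simp
  ring

theorem norm_h_ofReal_lt_one {a : ℝ} (ha : |a| < 1) (hz : ‖z‖ < 1) : ‖h a z‖ < 1 := by
  simpa [h, Complex.conj_ofReal] using
    norm_add_div_one_add_conj_mul_lt_one (α := a) (by rwa [Complex.norm_real]) hz

theorem norm_hCoeff_succ {a : ℝ} (ha0 : 0 ≤ a) (ha1 : a ≤ 1) (k : ℕ) :
    ‖hCoeff a (k + 1)‖ = (1 - a ^ 2) * a ^ k := by
  have hc : 1 - (a : ℂ) ^ 2 = ((1 - a ^ 2 : ℝ) : ℂ) := by push_cast; ring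
  rw [hCoeff, norm_mul, hc, norm_pow, norm_neg, Complex.norm_real, Complex.norm_real,
    Real.norm_of_nonneg ha0, Real.norm_of_nonneg (by nlinarith)]

theorem norm_gCoeff_succ {a : ℝ} (ha0 : 0 ≤ a) (ha1 : a ≤ 1) (k : ℕ) :
    ‖gCoeff a (k + 1)‖ = (1 - a ^ 2) / a ^ 2 * (k / (k + 1)) * a ^ (k + 1) := by
  have hc : (1 - (a : ℂ) ^ 2) / (a : ℂ) ^ 2 * ((k : ℂ) / (k + 1))
      = (((1 - a ^ 2) / a ^ 2 * (k / (k + 1)) : ℝ) : ℂ) := by push_cast; ring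
  have : 0 ≤ 1 - a ^ 2 := by nlinarith
  rw [gCoeff, norm_mul, hc, norm_pow, norm_neg, Complex.norm_real, Complex.norm_real,
    Real.norm_of_nonneg ha0, Real.norm_of_nonneg (by positivity)]

def bohrFactor (r a : ℝ) : ℝ :=
  r / (1 - a * r) + (a * r / (1 - a * r) + Real.log (1 - a * r)) / a ^ 2

theorem hasSum_norm_coeff_mul_pow {a r : ℝ} (ha0 : 0 < a) (ha1 : a ≤ 1) (hr : |r| < 1) :
    HasSum (fun k => (‖hCoeff a (k + 1)‖ + ‖gCoeff a (k + 1)‖) * r ^ (k + 1))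
      ((1 - a ^ 2) * bohrFactor r a) := by
  have hρ : |a * r| < 1 := by
    rw [abs_mul, abs_of_pos ha0]
    nlinarith [abs_nonneg r]
  have hρ1 : 1 - a * r ≠ 0 := by linarith [le_abs_self (a * r)]
  have geom := hasSum_geometric_of_abs_lt_one hρ
  have log := Real.hasSum_pow_div_log_of_abs_lt_one hρ
  have hsum := (geom.mul_left ((1 - a ^ 2) * r)).add
    (((geom.mul_left (a * r)).sub log).mul_left ((1 - a ^ 2) / a ^ 2))
  have hval : (1 - a ^ 2) * bohrFactor r a = (1 - a ^ 2) * r * (1 - a * r)⁻¹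
      + (1 - a ^ 2) / a ^ 2 * (a * r * (1 - a * r)⁻¹ - -Real.log (1 - a * r)) := by
    unfold bohrFactor
    field_simp
    ring
  rw [hval]
  refine hsum.congr_fun fun k => ?_
  rw [norm_hCoeff_succ ha0.le ha1, norm_gCoeff_succ ha0.le ha1]
  field_simp
  ring

theorem exists_one_lt_add_mul_bohrFactor {r : ℝ} (hr : r < 1)
    (hF : 1 < 5 * r + 2 * (1 - r) * Real.log (1 - r)) :
    ∃ a ∈ Set.Ioo (0 : ℝ) 1, 1 < a + (1 - a ^ 2) * bohrFactor r a := by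
  set Q : ℝ → ℝ := fun a => (1 + a) * bohrFactor r a
  have hQ1 : 1 < Q 1 := by
    have hr1 : 1 - r ≠ 0 := by linarith
    have : Q 1 - 1 = (5 * r + 2 * (1 - r) * Real.log (1 - r) - 1) / (1 - r) := by
      simp only [Q, bohrFactor, one_mul]
      field_simp
      ring
    linarith [div_pos (sub_pos.2 hF) (sub_pos.2 hr)]
  have hQ : ContinuousAt Q 1 := by
    simp only [Q, bohrFactor]
    fun_prop (disch := simp [sub_eq_zero, hr.ne'])
  obtain ⟨a, hQa, ha⟩ := ((hQ.eventually_const_lt hQ1).filter_mono nhdsWithin_le_nhds |>.and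
    (Ioo_mem_nhdsLT zero_lt_one)).exists
  refine ⟨a, ha, ?_⟩
  have : a + (1 - a ^ 2) * bohrFactor r a - 1 = (1 - a) * (Q a - 1) := by ring
  linarith [mul_pos (sub_pos.2 ha.2) (sub_pos.2 hQa)]

end Extremal

end

/-- Sharpness of the radius `r₀` (the root of `5x + 2(1-x)log(1-x) = 1`): for every `r`
with `r₀ < r < 1` there are `h, g` analytic on the unit disk with `|h| < 1` and
`g'(z) = η z h'(z)` for some `|η| = 1`, such that
`|a₀| + ∑_{k≥1} (|aₖ| + |bₖ|) rᵏ > 1`. -/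
theorem stmt11 (r₀ : ℝ) (hr₀ : r₀ ∈ Set.Ioo (0:ℝ) 1)
    (hroot : 5 * r₀ + 2 * (1 - r₀) * Real.log (1 - r₀) = 1)
    (r : ℝ) (hr1 : r₀ < r) (hr2 : r < 1) :
    ∃ (h g : ℂ → ℂ) (a b : ℕ → ℂ) (η : ℂ), b 0 = 0 ∧
      (∀ z ∈ ball (0:ℂ) 1, HasSum (fun k => a k * z ^ k) (h z)) ∧
      (∀ z ∈ ball (0:ℂ) 1, HasSum (fun k => b k * z ^ k) (g z)) ∧
      DifferentiableOn ℂ h (ball (0:ℂ) 1) ∧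
      DifferentiableOn ℂ g (ball (0:ℂ) 1) ∧
      (∀ z ∈ ball (0:ℂ) 1, ‖h z‖ < 1) ∧
      ‖η‖ = 1 ∧
      (∀ z ∈ ball (0:ℂ) 1, deriv g z = η * z * deriv h z) ∧
      1 < ‖a 0‖
        + (∑' k : ℕ, (‖a (k+1)‖ + ‖b (k+1)‖) * r ^ (k+1)) := by
  have hr : 0 < r := hr₀.1.trans hr1
  have hF : 1 < 5 * r + 2 * (1 - r) * Real.log (1 - r) :=
    hroot.symm.trans_lt <|
      strictMonoOn_five_mul_add_two_mul_log ⟨hr₀.1.le, hr₀.2⟩ ⟨hr.le, hr2⟩ hr1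
  obtain ⟨a, ⟨ha0, ha1⟩, hbohr⟩ := Extremal.exists_one_lt_add_mul_bohrFactor hr2 hF
  have hα : (a : ℂ) ≠ 0 := by exact_mod_cast ha0.ne'
  have haz : ∀ z ∈ ball (0 : ℂ) 1, ‖(a : ℂ) * z‖ < 1 := fun z hz => by
    rw [norm_mul, Complex.norm_real, Real.norm_of_nonneg ha0.le]
    exact mul_lt_one_of_nonneg_of_lt_one_left ha0.le ha1 (mem_ball_zero_iff.1 hz).le
  have hne : ∀ z ∈ ball (0 : ℂ) 1, 1 + (a : ℂ) * z ≠ 0 := fun z hz =>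
    Extremal.one_add_mul_ne_zero (haz z hz)
  open Extremal in
  refine ⟨h a, g a, hCoeff a, gCoeff a, 1, rfl, fun z hz => hasSum_hCoeff (haz z hz),
    fun z hz => hasSum_gCoeff hα (haz z hz),
    fun z hz => (hasDerivAt_h (hne z hz)).differentiableAt.differentiableWithinAt,
    fun z hz => (hasDerivAt_g hα (haz z hz)).differentiableAt.differentiableWithinAt,
    fun z hz => norm_h_ofReal_lt_one (abs_lt.2 ⟨by linarith, ha1⟩) (mem_ball_zero_iff.1 hz),
    norm_one, fun z hz => ?_, ?_⟩
  · rw [(hasDerivAt_g hα (haz z hz)).deriv, (hasDerivAt_h (hne z hz)).deriv, one_mul]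
  · rw [(hasSum_norm_coeff_mul_pow ha0 ha1.le (abs_lt.2 ⟨by linarith, hr2⟩)).tsum_eq, hCoeff,
      Complex.norm_real, Real.norm_of_nonneg ha0.le]
    exact hbohr
end

section
/- Let h(z) = Σ_{k=0}^∞ a_k z^k and g(z) = Σ_{k=1}^∞ b_k z^k be analytic on the unit disk 𝔻 with |h(z)| < 1 and |g'(z)| ≤ |h'(z)| for all z ∈ 𝔻. Then for every r with 0 ≤ r < 1, Σ_{k=1}^∞ k (|a_k|² − |b_k|²) r^{2k} ≤ (1 − |a_0|²)² · r² / (1 − r²)². -/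
/-!
Fix `n ≥ 1` and a primitive `n`-th root of unity `ω`. Averaging `h` over the rotations
`z ↦ ωʲ z` kills every coefficient whose index is not a multiple of `n`, so
`F(w) = ∑ₘ a_{nm} wᵐ` satisfies `n F(zⁿ) = ∑ⱼ h(ωʲ z)`. Hence `F` is again a holomorphic self-map
of the disk, with `F(0) = a₀` and `F'(0) = aₙ`, and the Schwarz–Pick inequality at the origin gives
`|aₙ| ≤ 1 - |a₀|²`. The area bound follows by discarding the `|bₖ|²` terms and summing
`∑ k xᵏ = x / (1 - x)²` at `x = r²`.
-/

open Metric Set Finset Complex ComplexConjugate FormalMultilinearSeries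

theorem IsPrimitiveRoot.geom_sum_pow_eq_ite {R : Type*} [CommRing R] [IsDomain R] {ζ : R} {n : ℕ}
    (hζ : IsPrimitiveRoot ζ n) (k : ℕ) :
    ∑ j ∈ range n, (ζ ^ k) ^ j = if n ∣ k then (n : R) else 0 := by
  split_ifs with hk
  · simp [(hζ.pow_eq_one_iff_dvd k).mpr hk]
  · have hne : ζ ^ k - 1 ≠ 0 := sub_ne_zero.mpr fun h => hk ((hζ.pow_eq_one_iff_dvd k).mp h)
    have hgeom := mul_geom_sum (ζ ^ k) n
    rw [← pow_mul, mul_comm k, pow_mul, hζ.pow_eq_one, one_pow, sub_self] at hgeom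
    exact (mul_eq_zero.mp hgeom).resolve_left hne

theorem norm_sub_div_one_sub_conj_mul_lt_one {α β : ℂ} (hα : ‖α‖ < 1) (hβ : ‖β‖ < 1) :
    ‖(α - β) / (1 - conj β * α)‖ < 1 := by
  have key : normSq (1 - conj β * α) - normSq (α - β) = (1 - normSq α) * (1 - normSq β) := by
    simp only [normSq_apply, sub_re, sub_im, one_re, one_im, mul_re, mul_im, conj_re, conj_im]
    ring
  rw [← sq_lt_one_iff₀ (norm_nonneg _), ← normSq_eq_norm_sq] at hα hβ
  have hlt : ‖α - β‖ ^ 2 < ‖1 - conj β * α‖ ^ 2 := by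
    rw [← normSq_eq_norm_sq, ← normSq_eq_norm_sq]
    nlinarith
  have hlt' := lt_of_pow_lt_pow_left₀ 2 (norm_nonneg _) hlt
  rw [norm_div, div_lt_one ((norm_nonneg _).trans_lt hlt')]
  exact hlt'

theorem norm_deriv_le_one_sub_sq_of_mapsTo_ball {f : ℂ → ℂ}
    (hd : DifferentiableOn ℂ f (ball 0 1)) (hf : MapsTo f (ball 0 1) (ball 0 1)) :
    ‖deriv f 0‖ ≤ 1 - ‖f 0‖ ^ 2 := by
  set c := f 0
  have hc : ‖c‖ < 1 := mem_ball_zero_iff.mp (hf (mem_ball_self one_pos))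
  have hden : ∀ w ∈ ball (0 : ℂ) 1, 1 - conj c * f w ≠ 0 := fun w hw => by
    refine sub_ne_zero.mpr fun h => ?_
    have : ‖conj c * f w‖ < 1 := by
      rw [norm_mul, Complex.norm_conj]
      exact mul_lt_one_of_nonneg_of_lt_one_left (norm_nonneg _) hc (mem_ball_zero_iff.mp (hf hw)).le
    rw [← h, norm_one] at this
    exact lt_irrefl _ this
  -- The Möbius transform of `f` vanishing at the origin, to which the Schwarz lemma applies.
  set φ : ℂ → ℂ := fun w => (f w - c) / (1 - conj c * f w)
  have hφd : DifferentiableOn ℂ φ (ball 0 1) :=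
    (hd.sub_const c).div ((differentiableOn_const 1).sub (hd.const_mul _)) hden
  have hφ : MapsTo φ (ball 0 1) (closedBall (φ 0) 1) := fun w hw => by
    simpa [φ, c] using (norm_sub_div_one_sub_conj_mul_lt_one (mem_ball_zero_iff.mp (hf hw)) hc).le
  have hc2 : (1 : ℂ) - conj c * c ≠ 0 := hden 0 (mem_ball_self one_pos)
  have hf' : HasDerivAt f (deriv f 0) 0 :=
    (hd.differentiableAt (isOpen_ball.mem_nhds (mem_ball_self one_pos))).hasDerivAt
  have hφ' : HasDerivAt φ (deriv f 0 / (1 - conj c * c)) 0 := by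
    refine ((hf'.sub_const c).div ((hf'.const_mul (conj c)).const_sub 1) hc2).congr_deriv ?_
    rw [sub_self, zero_mul, sub_zero, sq, mul_div_mul_right _ _ hc2]
  have hschwarz := Complex.norm_deriv_le_div_of_mapsTo_ball hφd hφ one_pos
  rw [hφ'.deriv, div_one, norm_div, div_le_one (norm_pos_iff.mpr hc2)] at hschwarz
  rwa [conj_mul', ← ofReal_pow, ← ofReal_one, ← ofReal_sub, norm_real, Real.norm_of_nonneg
    (sub_nonneg.mpr (pow_le_one₀ (norm_nonneg c) hc.le))] at hschwarz

section PowerSeries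

variable {c : ℕ → ℂ}

theorem one_le_radius_ofScalars (hs : ∀ z ∈ ball (0 : ℂ) 1, Summable fun k => c k * z ^ k) :
    1 ≤ (ofScalars ℂ c).radius := by
  refine ENNReal.le_of_forall_nnreal_lt fun ρ hρ => (ofScalars ℂ c).le_radius_of_tendsto (l := 0) ?_
  have hρ' : ((ρ : ℝ) : ℂ) ∈ ball (0 : ℂ) 1 := by simpa using hρ
  simpa [ofScalars_norm] using (hs _ hρ').tendsto_atTop_zero.norm

theorem hasFPowerSeriesOnBall_ofScalarsSum
    (hs : ∀ z ∈ ball (0 : ℂ) 1, Summable fun k => c k * z ^ k) :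
    HasFPowerSeriesOnBall (ofScalarsSum c) (ofScalars ℂ c) 0 1 :=
  ((ofScalars ℂ c).hasFPowerSeriesOnBall (one_pos.trans_le (one_le_radius_ofScalars hs))).mono
    one_pos (one_le_radius_ofScalars hs)

theorem hasSum_ofScalarsSum {w : ℂ} (hs : Summable fun k => c k * w ^ k) :
    HasSum (fun k => c k * w ^ k) (ofScalarsSum c w) := by
  rw [ofScalars_sum_eq]
  exact hs.hasSum

theorem exists_pow_eq_of_mem_ball {n : ℕ} (hn : n ≠ 0) {w : ℂ} (hw : w ∈ ball (0 : ℂ) 1) :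
    ∃ z ∈ ball (0 : ℂ) 1, z ^ n = w := by
  refine ⟨w ^ (n⁻¹ : ℂ), ?_, cpow_nat_inv_pow w hn⟩
  rw [mem_ball_zero_iff] at hw ⊢
  rwa [← pow_lt_one_iff_of_nonneg (norm_nonneg _) hn, ← norm_pow, cpow_nat_inv_pow w hn]

theorem summable_comp_mul_of_summable_on_ball
    (hs : ∀ z ∈ ball (0 : ℂ) 1, Summable fun k => c k * z ^ k) {n : ℕ} (hn : n ≠ 0) :
    ∀ w ∈ ball (0 : ℂ) 1, Summable fun m => c (n * m) * w ^ m := by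
  intro w hw
  obtain ⟨z, hz, rfl⟩ := exists_pow_eq_of_mem_ball hn hw
  simpa [Function.comp_def, pow_mul] using (hs z hz).comp_injective (mul_right_injective₀ hn)

variable {h : ℂ → ℂ} (hh : ∀ z ∈ ball (0 : ℂ) 1, HasSum (fun k => c k * z ^ k) (h z))
include hh

theorem hasSum_sum_rotations {n : ℕ} (hn : n ≠ 0) {ω : ℂ} (hω : IsPrimitiveRoot ω n) {z : ℂ}
    (hz : z ∈ ball (0 : ℂ) 1) :
    HasSum (fun m => n * (c (n * m) * (z ^ n) ^ m)) (∑ j ∈ range n, h (ω ^ j * z)) := by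
  have hmem : ∀ j, ω ^ j * z ∈ ball (0 : ℂ) 1 := fun j => by
    simpa [norm_mul, norm_pow, hω.norm'_eq_one hn] using hz
  have hsum := hasSum_sum fun j (_ : j ∈ range n) => hh _ (hmem j)
  have hterm : ∀ k, ∑ j ∈ range n, c k * (ω ^ j * z) ^ k
      = if n ∣ k then n * (c k * z ^ k) else 0 := fun k => by
    simp_rw [mul_pow, ← pow_mul, mul_comm _ k, pow_mul]
    rw [← mul_sum, ← sum_mul, hω.geom_sum_pow_eq_ite k]
    split_ifs <;> ring
  simp_rw [hterm] at hsum
  rw [← (mul_right_injective₀ hn).hasSum_iff] at hsum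
  · simpa [Function.comp_def, pow_mul] using hsum
  · rintro k hk
    rw [if_neg]
    rintro ⟨m, rfl⟩
    exact hk ⟨m, rfl⟩

theorem mapsTo_ofScalarsSum_comp_mul (hb : MapsTo h (ball 0 1) (ball 0 1)) {n : ℕ} (hn : n ≠ 0) :
    MapsTo (ofScalarsSum (E := ℂ) fun m => c (n * m)) (ball 0 1) (ball 0 1) := by
  intro w hw
  obtain ⟨z, hz, rfl⟩ := exists_pow_eq_of_mem_ball hn hw
  obtain ⟨ω, hω⟩ : ∃ ω : ℂ, IsPrimitiveRoot ω n := ⟨_, isPrimitiveRoot_exp n hn⟩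
  have hF := hasSum_ofScalarsSum
    (summable_comp_mul_of_summable_on_ball (fun z hz => (hh z hz).summable) hn _ hw)
  have hsum : n * ofScalarsSum (fun m => c (n * m)) (z ^ n) = ∑ j ∈ range n, h (ω ^ j * z) :=
    (hF.mul_left (n : ℂ)).unique (hasSum_sum_rotations hh hn hω hz)
  have hrot : ∀ j ∈ range n, ‖h (ω ^ j * z)‖ < 1 := fun j _ => mem_ball_zero_iff.mp <| hb <| by
    simpa [norm_mul, norm_pow, hω.norm'_eq_one hn] using hz
  have hnpos : (0 : ℝ) < n := by positivity
  rw [mem_ball_zero_iff, ← mul_lt_mul_iff_right₀ hnpos, mul_one]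
  calc n * ‖ofScalarsSum (fun m => c (n * m)) (z ^ n)‖
      = ‖∑ j ∈ range n, h (ω ^ j * z)‖ := by rw [← hsum, norm_mul, norm_natCast]
    _ ≤ ∑ j ∈ range n, ‖h (ω ^ j * z)‖ := norm_sum_le _ _
    _ < ∑ j ∈ range n, (1 : ℝ) := sum_lt_sum_of_nonempty (nonempty_range_iff.mpr hn) hrot
    _ = n := by simp

theorem norm_coeff_le_one_sub_sq (hb : MapsTo h (ball 0 1) (ball 0 1)) {n : ℕ} (hn : n ≠ 0) :
    ‖c n‖ ≤ 1 - ‖c 0‖ ^ 2 := by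
  have hF := hasFPowerSeriesOnBall_ofScalarsSum
    (summable_comp_mul_of_summable_on_ball (fun z hz => (hh z hz).summable) hn)
  have hd : DifferentiableOn ℂ (ofScalarsSum (E := ℂ) fun m => c (n * m)) (ball 0 1) := by
    rw [← eball_ofReal, ENNReal.ofReal_one]
    exact hF.differentiableOn
  simpa [hF.hasFPowerSeriesAt.deriv, ofScalarsSum_zero] using
    norm_deriv_le_one_sub_sq_of_mapsTo_ball hd (mapsTo_ofScalarsSum_comp_mul hh hb hn)

end PowerSeries

theorem hasSum_succ_mul_pow_succ {𝕜 : Type*} [NormedDivisionRing 𝕜] {x : 𝕜}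
    (hx : ‖x‖ < 1) : HasSum (fun k : ℕ => ((k : 𝕜) + 1) * x ^ (k + 1)) (x / (1 - x) ^ 2) := by
  simpa using (hasSum_nat_add_iff' (f := fun n : ℕ => (n : 𝕜) * x ^ n) 1).mpr
    (hasSum_coe_mul_geometric_of_norm_lt_one hx)

theorem tsum_le_of_le_of_hasSum {ι α : Type*} [AddCommMonoid α] [PartialOrder α]
    [IsOrderedAddMonoid α] [TopologicalSpace α] [OrderClosedTopology α] {f g : ι → α} {s : α}
    (hfg : ∀ i, f i ≤ g i) (hg : ∀ i, 0 ≤ g i) (hs : HasSum g s) : ∑' i, f i ≤ s :=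
  tsum_le_of_sum_le' (hs.nonneg hg) fun t =>
    (sum_le_sum fun i _ => hfg i).trans (sum_le_hasSum t (fun i _ => hg i) hs)

theorem stmt15_general (h : ℂ → ℂ) (a b : ℕ → ℂ)
    (hha : ∀ z ∈ ball (0:ℂ) 1, HasSum (fun k => a k * z ^ k) (h z))
    (hb : ∀ z ∈ ball (0:ℂ) 1, ‖h z‖ < 1)
    (r : ℝ) (hr0 : 0 ≤ r) (hr : r < 1) :
    (∑' k : ℕ, ((k:ℝ)+1) * ((‖a (k+1)‖)^2 - (‖b (k+1)‖)^2)
        * r ^ (2*(k+1)))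
      ≤ (1 - (‖a 0‖)^2)^2 * r^2 / (1 - r^2)^2 := by
  have hr2 : ‖r ^ 2‖ < 1 := by
    rw [norm_pow, Real.norm_of_nonneg hr0]
    exact pow_lt_one₀ hr0 hr two_ne_zero
  have hcoeff (k : ℕ) : ‖a (k + 1)‖ ^ 2 ≤ (1 - ‖a 0‖ ^ 2) ^ 2 :=
    pow_le_pow_left₀ (norm_nonneg _)
      (norm_coeff_le_one_sub_sq hha (fun z hz => mem_ball_zero_iff.mpr (hb z hz)) k.succ_ne_zero) 2
  refine tsum_le_of_le_of_hasSum
    (g := fun k : ℕ => (1 - ‖a 0‖ ^ 2) ^ 2 * (((k : ℝ) + 1) * (r ^ 2) ^ (k + 1)))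
    (fun k => ?_) (fun k => by positivity) ?_
  · calc ((k : ℝ) + 1) * (‖a (k + 1)‖ ^ 2 - ‖b (k + 1)‖ ^ 2) * r ^ (2 * (k + 1))
        ≤ ((k : ℝ) + 1) * (1 - ‖a 0‖ ^ 2) ^ 2 * (r ^ 2) ^ (k + 1) := by
          rw [pow_mul]
          gcongr
          linarith [hcoeff k, sq_nonneg ‖b (k + 1)‖]
      _ = _ := by ring
  · simpa [mul_div_assoc] using (hasSum_succ_mul_pow_succ hr2).mul_left ((1 - ‖a 0‖ ^ 2) ^ 2)

/-- Area bound: if `h(z) = ∑ aₖ zᵏ` and `g(z) = ∑ bₖ zᵏ` are analytic on the unit disk with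
`|h| < 1` and `|g'| ≤ |h'|`, then for `0 ≤ r < 1`,
`∑_{k≥1} k (|aₖ|² - |bₖ|²) r^{2k} ≤ (1-|a₀|²)² r²/(1-r²)²`. -/
theorem stmt15 (h g : ℂ → ℂ) (a b : ℕ → ℂ) (hb0 : b 0 = 0)
    (hha : ∀ z ∈ ball (0:ℂ) 1, HasSum (fun k => a k * z ^ k) (h z))
    (hga : ∀ z ∈ ball (0:ℂ) 1, HasSum (fun k => b k * z ^ k) (g z))
    (hhd : DifferentiableOn ℂ h (ball (0:ℂ) 1))
    (hgd : DifferentiableOn ℂ g (ball (0:ℂ) 1))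
    (hb : ∀ z ∈ ball (0:ℂ) 1, ‖h z‖ < 1)
    (hd : ∀ z ∈ ball (0:ℂ) 1, ‖deriv g z‖ ≤ ‖deriv h z‖)
    (r : ℝ) (hr0 : 0 ≤ r) (hr : r < 1) :
    (∑' k : ℕ, ((k:ℝ)+1) * ((‖a (k+1)‖)^2 - (‖b (k+1)‖)^2)
        * r ^ (2*(k+1)))
      ≤ (1 - (‖a 0‖)^2)^2 * r^2 / (1 - r^2)^2 :=
  stmt15_general h a b hha hb r hr0 hr
end

section
/- For every real x with 1/3 ≤ x ≤ 1, (23 − 13x + 9x² − 3x³)·sqrt(2(3 − x²)) − 16(3 − x) ≥ 0. -/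
/-- For `1/3 ≤ x ≤ 1`: `(23 - 13x + 9x² - 3x³)√(2(3-x²)) - 16(3-x) ≥ 0`. -/
theorem stmt18 (x : ℝ) (hx0 : 1/3 ≤ x) (hx1 : x ≤ 1) :
    0 ≤ (23 - 13*x + 9*x^2 - 3*x^3) * Real.sqrt (2 * (3 - x^2)) - 16 * (3 - x) := by
  set s := Real.sqrt (2 * (3 - x^2)) with hs
  have hnn : (0:ℝ) ≤ 2 * (3 - x^2) := by nlinarith
  have hs0 : 0 ≤ s := Real.sqrt_nonneg _
  have hsq : s^2 = 2 * (3 - x^2) := Real.sq_sqrt hnn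
  have hA : 0 < 23 - 13*x + 9*x^2 - 3*x^3 := by nlinarith
  have key : (16*(3-x))^2 ≤ (23 - 13*x + 9*x^2 - 3*x^3)^2 * (2*(3-x^2)) := by
    nlinarith [sq_nonneg (x-1), sq_nonneg (x-1/3), sq_nonneg ((x-1)*(x-1/3)),
      sq_nonneg (x*(x-1)), sq_nonneg ((x-1)^2*(x-1/3)), sq_nonneg ((x-1)^3),
      mul_nonneg (mul_nonneg (sub_nonneg.2 hx1) (sub_nonneg.2 hx1)) (sub_nonneg.2 hx0)]
  nlinarith [key, mul_nonneg hA.le hs0, sq_nonneg ((23 - 13*x + 9*x^2 - 3*x^3) * s - 16*(3-x)), mul_pos hA hA]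
end

section
/- For all real numbers x and r with 0 ≤ x ≤ 1 and 0 ≤ r ≤ sqrt(5/(9 + 4·sqrt(5))), one has 2r³x³ + 2r²x² − (r + r³)x + 1 − 3r² ≥ 0. -/
/-- For `0 ≤ x ≤ 1` and `0 ≤ r ≤ √(5/(9+4√5))`:
`2r³x³ + 2r²x² - (r + r³)x + 1 - 3r² ≥ 0`. -/
theorem stmt19 (x r : ℝ) (hx0 : 0 ≤ x) (hx1 : x ≤ 1)
    (hr0 : 0 ≤ r) (hr : r ≤ Real.sqrt (5 / (9 + 4 * Real.sqrt 5))) :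
    0 ≤ 2*r^3*x^3 + 2*r^2*x^2 - (r + r^3)*x + 1 - 3*r^2 := by
  set s := Real.sqrt 5 with hsdef
  have hs : s ^ 2 = 5 := Real.sq_sqrt (by norm_num)
  have hsl : (2.2360679:ℝ) ≤ s := by
    rw [hsdef]; rw [show (2.2360679:ℝ) = Real.sqrt (2.2360679^2) by
      rw [Real.sqrt_sq (by norm_num)]]
    exact Real.sqrt_le_sqrt (by norm_num)
  have hsu : s ≤ 2.2360680 := by
    rw [hsdef]; rw [show (2.2360680:ℝ) = Real.sqrt (2.2360680^2) by
      rw [Real.sqrt_sq (by norm_num)]]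
    exact Real.sqrt_le_sqrt (by norm_num)
  have hkey : Real.sqrt (5 / (9 + 4 * s)) = 5 - 2 * s := by
    rw [show 5 / (9 + 4 * s) = (5 - 2*s)^2 by
      field_simp; nlinarith]
    exact Real.sqrt_sq (by nlinarith)
  rw [hkey] at hr
  -- B ≥ 0
  have hB : 0 ≤ 25 - 85*r^2 - 4*s*r^3 := by
    have h1 : 0 ≤ (5 - 2*s - r) * (4*s*r^2 + (20*s+45)*r + 10*s+25) := by
      apply mul_nonneg (by linarith)
      nlinarith [sq_nonneg r, mul_nonneg hr0 hr0]
    nlinarith [h1]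
  -- A + B ≥ 0
  have hAB : 0 ≤ 5*r^3 - 4*s*r^3 + 20*s*r^2 - 85*r^2 - 25*r + 25 := by
    nlinarith [mul_nonneg (mul_nonneg hr0 hr0) hr0, sq_nonneg r,
      mul_nonneg (sub_nonneg.2 hr) hr0, sq_nonneg (5 - 2*s - r),
      mul_nonneg (mul_nonneg (sub_nonneg.2 hr) (sub_nonneg.2 hr)) hr0,
      mul_nonneg (sub_nonneg.2 hr) (sq_nonneg r)]
  -- E ≥ 0
  have hE : 0 ≤ 2*r^2*s/25 * ((s*x-1)^2 * (s*r*x + s + 2*r)) := by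
    apply mul_nonneg (by positivity)
    apply mul_nonneg (sq_nonneg _)
    have : (0:ℝ) ≤ s*r*x := by positivity
    nlinarith
  have h2 : 0 ≤ x * ((5*r^3 - 4*s*r^3 + 20*s*r^2 - 85*r^2 - 25*r + 25)/25) :=
    mul_nonneg hx0 (by linarith)
  have h3 : 0 ≤ (1-x) * ((25 - 85*r^2 - 4*s*r^3)/25) :=
    mul_nonneg (by linarith) (by linarith)
  have hid : 2*r^3*x^3 + 2*r^2*x^2 - (r + r^3)*x + 1 - 3*r^2
      = 2*r^2*s/25 * ((s*x-1)^2 * (s*r*x + s + 2*r))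
        + x * ((5*r^3 - 4*s*r^3 + 20*s*r^2 - 85*r^2 - 25*r + 25)/25)
        + (1-x) * ((25 - 85*r^2 - 4*s*r^3)/25) := by
    linear_combination (-(2/25)*(s^2+5)*(x^3*r^3+x^2*r^2) + (6/25)*x*r^3
      - (2/25)*r^2 + (4/25)*s*x*r^2) * hs
  rw [hid]
  linarith [hE, h2, h3]
end
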